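/- arXiv:0711.4206 — 5 statements merged into one kernel-verified Lean document; each statement's English description precedes it below -/
import Mathlib

section
/- For every s ∈ ℝ one has the first integral q(s)² = u(s)² − 2·v(s). -/
open Filter Topology

theorem eq_of_hasDerivAt_zero_of_tendsto {E : Type*} [NormedAddCommGroup E]
    [NormedSpace ℝ E] {F : ℝ → E} {l : Filter ℝ} [l.NeBot] {L : E}
    (hF : ∀ x, HasDerivAt F 0 x) (hL : Tendsto F l (𝓝 L)) (s : ℝ) : F s = L := by
  have hconst : F = fun _ => F s :=
    funext fun y => is_const_of_deriv_eq_zero (fun x => (hF x).differentiableAt)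
      (fun x => (hF x).deriv) y s
  rw [hconst] at hL
  exact tendsto_nhds_unique tendsto_const_nhds hL

theorem hasDerivAt_sq_sub_sq_add_two_mul_eq_zero {q p u v : ℝ → ℝ} {x : ℝ}
    (hq : HasDerivAt q (p x - u x * q x) x) (hu : HasDerivAt u (-(q x) ^ 2) x)
    (hv : HasDerivAt v (-(p x * q x)) x) :
    HasDerivAt (fun y => q y ^ 2 - u y ^ 2 + 2 * v y) 0 x := by
  refine (((hq.fun_pow 2).fun_sub (hu.fun_pow 2)).fun_add (hv.const_mul 2)).congr_deriv ?_
  simp only [Nat.cast_ofNat, Nat.add_one_sub_one, pow_one]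
  ring

theorem stmt1_general (q p u v : ℝ → ℝ)
    (hq : ∀ x : ℝ, HasDerivAt q (p x - u x * q x) x)
    (hu : ∀ x : ℝ, HasDerivAt u (-(q x) ^ 2) x)
    (hv : ∀ x : ℝ, HasDerivAt v (-(p x * q x)) x)
    (hq0 : Tendsto q atTop (nhds 0))
    (hu0 : Tendsto u atTop (nhds 0))
    (hv0 : Tendsto v atTop (nhds 0)) :
    ∀ s : ℝ, (q s) ^ 2 = (u s) ^ 2 - 2 * v s := by
  intro s
  have hlim : Tendsto (fun y => q y ^ 2 - u y ^ 2 + 2 * v y) atTop (𝓝 0) := by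
    simpa using ((hq0.pow 2).sub (hu0.pow 2)).add (hv0.const_mul 2)
  have hzero := eq_of_hasDerivAt_zero_of_tendsto
    (fun x => hasDerivAt_sq_sub_sq_add_two_mul_eq_zero (hq x) (hu x) (hv x)) hlim s
  linarith

/-- For the Tracy–Widom system `q' = p - u q`, `p' = x q - 2 v q + u p`,
`u' = -q²`, `v' = -p q` with vanishing boundary conditions at `+∞`, for every `s ∈ ℝ`
one has the first integral `q(s)² = u(s)² - 2 v(s)`. -/
theorem stmt1 (q p u v : ℝ → ℝ)
    (hq : ∀ x : ℝ, HasDerivAt q (p x - u x * q x) x)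
    (hp : ∀ x : ℝ, HasDerivAt p (x * q x - 2 * v x * q x + u x * p x) x)
    (hu : ∀ x : ℝ, HasDerivAt u (-(q x) ^ 2) x)
    (hv : ∀ x : ℝ, HasDerivAt v (-(p x * q x)) x)
    (hq0 : Tendsto q atTop (nhds 0))
    (hpq0 : Tendsto (fun x => p x * q x) atTop (nhds 0))
    (hu0 : Tendsto u atTop (nhds 0))
    (hv0 : Tendsto v atTop (nhds 0)) :
    ∀ s : ℝ, (q s) ^ 2 = (u s) ^ 2 - 2 * v s :=
  stmt1_general q p u v hq hu hv hq0 hu0 hv0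
end

section
/- Fix s ∈ ℝ. Assume in addition that x ↦ (x−s)·(x·q(x)² − 4·q(x)²·v(x) + 3·q(x)²·u(x)² − 2·p(x)q(x)u(x) + p(x)²) and x ↦ p(x)q(x) − u(x)q(x)² are Lebesgue integrable on (s, ∞), and that (x−s)·(p(x)q(x) − u(x)q(x)²) → 0 as x → +∞. Then ∫_s^∞ (x−s)·(x·q(x)² − 4·q(x)²·v(x) + 3·q(x)²·u(x)² − 2·p(x)q(x)u(x) + p(x)²) dx = (1/2)·u(s)² − v(s). -/
/-!
The Tracy–Widom system has the first integral `q² - u² + 2v`, which vanishes identically by the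
boundary conditions at `+∞`. Put `g = pq - uq²`. Then `g = (u²/2 - v)'`, and, after eliminating
`q⁴ = q²(u² - 2v)`, the integrand of the theorem plus `g` is `((x - s) g)'`. Integrating both
derivatives over `(s, ∞)` gives `∫ g = v(s) - u(s)²/2` and `∫ ((x - s) F + g) = 0`.
-/

open Filter MeasureTheory Set Topology

theorem eq_of_hasDerivAt_zero_of_tendsto_atTop {E : Type*} [NormedAddCommGroup E]
    [NormedSpace ℝ E] {f : ℝ → E} {c : E} (hf : ∀ x, HasDerivAt f 0 x)
    (hc : Tendsto f atTop (𝓝 c)) (x : ℝ) : f x = c := by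
  have hconst : f = fun _ => f x :=
    funext fun y => is_const_of_deriv_eq_zero (fun z => (hf z).differentiableAt)
      (fun z => (hf z).deriv) y x
  rw [hconst] at hc
  exact tendsto_nhds_unique tendsto_const_nhds hc

section TracyWidom

variable {q p u v : ℝ → ℝ}

theorem tracyWidom_sq_eq (hq : ∀ x, HasDerivAt q (p x - u x * q x) x)
    (hu : ∀ x, HasDerivAt u (-(q x) ^ 2) x) (hv : ∀ x, HasDerivAt v (-(p x * q x)) x)
    (hq0 : Tendsto q atTop (𝓝 0)) (hu0 : Tendsto u atTop (𝓝 0)) (hv0 : Tendsto v atTop (𝓝 0))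
    (x : ℝ) : q x ^ 2 = u x ^ 2 - 2 * v x := by
  have hderiv : ∀ x, HasDerivAt (fun x => q x ^ 2 - u x ^ 2 + 2 * v x) 0 x := fun x =>
    ((((hq x).fun_pow 2).fun_sub ((hu x).fun_pow 2)).fun_add ((hv x).const_mul 2)).congr_deriv
      (by ring)
  have hlim : Tendsto (fun x => q x ^ 2 - u x ^ 2 + 2 * v x) atTop (𝓝 0) := by
    simpa using ((hq0.pow 2).sub (hu0.pow 2)).add (hv0.const_mul 2)
  linarith [eq_of_hasDerivAt_zero_of_tendsto_atTop hderiv hlim x]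

theorem tracyWidom_integral_Ioi_pq_sub_uq2 (hu : ∀ x, HasDerivAt u (-(q x) ^ 2) x)
    (hv : ∀ x, HasDerivAt v (-(p x * q x)) x) (hu0 : Tendsto u atTop (𝓝 0))
    (hv0 : Tendsto v atTop (𝓝 0)) (s : ℝ)
    (hint : IntegrableOn (fun x => p x * q x - u x * q x ^ 2) (Ioi s)) :
    ∫ x in Ioi s, (p x * q x - u x * q x ^ 2) = v s - u s ^ 2 / 2 := by
  have hderiv : ∀ x ∈ Ici s, HasDerivAt (fun x => u x ^ 2 / 2 - v x)
      (p x * q x - u x * q x ^ 2) x := fun x _ =>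
    ((((hu x).fun_pow 2).div_const 2).fun_sub (hv x)).congr_deriv (by ring)
  have hlim : Tendsto (fun x => u x ^ 2 / 2 - v x) atTop (𝓝 0) := by
    simpa using ((hu0.pow 2).div_const 2).sub hv0
  rw [integral_Ioi_of_hasDerivAt_of_tendsto' hderiv hint hlim]
  ring

theorem tracyWidom_hasDerivAt_mul_pq_sub_uq2 (hq : ∀ x, HasDerivAt q (p x - u x * q x) x)
    (hp : ∀ x, HasDerivAt p (x * q x - 2 * v x * q x + u x * p x) x)
    (hu : ∀ x, HasDerivAt u (-(q x) ^ 2) x) (hsq : ∀ x, q x ^ 2 = u x ^ 2 - 2 * v x)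
    (s x : ℝ) :
    HasDerivAt (fun x => (x - s) * (p x * q x - u x * q x ^ 2))
      ((x - s) * (x * q x ^ 2 - 4 * q x ^ 2 * v x + 3 * q x ^ 2 * u x ^ 2
        - 2 * p x * q x * u x + p x ^ 2) + (p x * q x - u x * q x ^ 2)) x := by
  refine (((hasDerivAt_id x).sub_const s).fun_mul
    (((hp x).fun_mul (hq x)).fun_sub ((hu x).fun_mul ((hq x).fun_pow 2)))).congr_deriv ?_
  simp only [id_eq]
  linear_combination ((x - s) * q x ^ 2) * hsq x

end TracyWidom

theorem stmt3_general (q p u v : ℝ → ℝ)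
    (hq : ∀ x : ℝ, HasDerivAt q (p x - u x * q x) x)
    (hp : ∀ x : ℝ, HasDerivAt p (x * q x - 2 * v x * q x + u x * p x) x)
    (hu : ∀ x : ℝ, HasDerivAt u (-(q x) ^ 2) x)
    (hv : ∀ x : ℝ, HasDerivAt v (-(p x * q x)) x)
    (hq0 : Tendsto q atTop (nhds 0))
    (hu0 : Tendsto u atTop (nhds 0))
    (hv0 : Tendsto v atTop (nhds 0))
    (s : ℝ)
    (hint1 : IntegrableOn
      (fun x => (x - s) * (x * (q x) ^ 2 - 4 * (q x) ^ 2 * v x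
        + 3 * (q x) ^ 2 * (u x) ^ 2 - 2 * p x * q x * u x + (p x) ^ 2)) (Ioi s))
    (hint2 : IntegrableOn (fun x => p x * q x - u x * (q x) ^ 2) (Ioi s))
    (hlim : Tendsto (fun x => (x - s) * (p x * q x - u x * (q x) ^ 2))
      atTop (nhds 0)) :
    (∫ x in Ioi s, (x - s) * (x * (q x) ^ 2 - 4 * (q x) ^ 2 * v x
        + 3 * (q x) ^ 2 * (u x) ^ 2 - 2 * p x * q x * u x + (p x) ^ 2))
      = (1 / 2) * (u s) ^ 2 - v s := by
  have hsq := tracyWidom_sq_eq hq hu hv hq0 hu0 hv0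
  have hsum := integral_Ioi_of_hasDerivAt_of_tendsto'
    (fun x _ => tracyWidom_hasDerivAt_mul_pq_sub_uq2 hq hp hu hsq s x) (hint1.add hint2) hlim
  rw [integral_add hint1 hint2, tracyWidom_integral_Ioi_pq_sub_uq2 hu hv hu0 hv0 s hint2] at hsum
  linarith

/-- For the Tracy–Widom system and fixed `s`, assuming integrability on
`(s,∞)` of `(x-s)·(x q² - 4 q² v + 3 q² u² - 2 p q u + p²)` and of `p q - u q²`, and
`(x-s)·(p q - u q²) → 0` at `+∞`, one has
`∫_s^∞ (x-s)·(x q² - 4 q² v + 3 q² u² - 2 p q u + p²) dx = (1/2) u(s)² - v(s)`. -/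
theorem stmt3 (q p u v : ℝ → ℝ)
    (hq : ∀ x : ℝ, HasDerivAt q (p x - u x * q x) x)
    (hp : ∀ x : ℝ, HasDerivAt p (x * q x - 2 * v x * q x + u x * p x) x)
    (hu : ∀ x : ℝ, HasDerivAt u (-(q x) ^ 2) x)
    (hv : ∀ x : ℝ, HasDerivAt v (-(p x * q x)) x)
    (hq0 : Tendsto q atTop (nhds 0))
    (hpq0 : Tendsto (fun x => p x * q x) atTop (nhds 0))
    (hu0 : Tendsto u atTop (nhds 0))
    (hv0 : Tendsto v atTop (nhds 0))
    (s : ℝ)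
    (hint1 : IntegrableOn
      (fun x => (x - s) * (x * (q x) ^ 2 - 4 * (q x) ^ 2 * v x
        + 3 * (q x) ^ 2 * (u x) ^ 2 - 2 * p x * q x * u x + (p x) ^ 2)) (Ioi s))
    (hint2 : IntegrableOn (fun x => p x * q x - u x * (q x) ^ 2) (Ioi s))
    (hlim : Tendsto (fun x => (x - s) * (p x * q x - u x * (q x) ^ 2))
      atTop (nhds 0)) :
    (∫ x in Ioi s, (x - s) * (x * (q x) ^ 2 - 4 * (q x) ^ 2 * v x
        + 3 * (q x) ^ 2 * (u x) ^ 2 - 2 * p x * q x * u x + (p x) ^ 2))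
      = (1 / 2) * (u s) ^ 2 - v s :=
  stmt3_general q p u v hq hp hu hv hq0 hu0 hv0 s hint1 hint2 hlim
end

section
/- Fix s ∈ ℝ and define q₁(x) := x·q(x) − v(x)q(x) + u(x)p(x). Assume in addition that x ↦ (x−s)·q(x)·(p(x) − u(x)q(x)), x ↦ q(x)², x ↦ (x−s)·(q(x)q₁(x) − 3·q(x)²v(x) + 3·q(x)²u(x)² − 3·p(x)q(x)u(x) + p(x)²) and x ↦ p(x)q(x) − u(x)q(x)² are Lebesgue integrable on (s, ∞), and that (x−s)·q(x)² → 0 and (x−s)·(p(x)q(x) − u(x)q(x)²) → 0 as x → +∞. Then, for every real constant c, setting a(x) := 2c·(p(x)q(x) − u(x)q(x)²), one has 10·(∫_s^∞ (x−s)·a(x) dx)² − 20·c²·∫_s^∞ (x−s)·(q(x)q₁(x) − 3·q(x)²v(x) + 3·q(x)²u(x)² − 3·p(x)q(x)u(x) + p(x)²) dx = 20·c²·v(s). -/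
open Filter MeasureTheory Set

/-!
The right-hand sides of the Tracy–Widom system are exact derivatives: `u² - 2v - q²` has derivative
zero and vanishes at `+∞`, so `u² - 2v = q²`. With this first integral, `q q'` is `(q²/2)'` and the
long integrand is `(pq - uq²)'`, so integrating `(x - s)` against them by parts gives
`∫ (x - s) q q' = -u(s)/2` and `∫ (x - s)(q q₁ - …) = u(s)²/2 - v(s)`, using `∫ q² = u(s)` and
`∫ (pq - uq²) = v(s) - u(s)²/2`. Substituting, the `u(s)²` terms cancel.
-/

theorem eq_zero_of_hasDerivAt_zero_of_tendsto_atTop {E : Type*} [NormedAddCommGroup E]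
    [NormedSpace ℝ E] {f : ℝ → E} (hf : ∀ x, HasDerivAt f 0 x)
    (hlim : Tendsto f atTop (nhds 0)) (x : ℝ) : f x = 0 := by
  have hconst : f = fun _ => f x :=
    funext fun y => is_const_of_deriv_eq_zero (fun z => (hf z).differentiableAt)
      (fun z => (hf z).deriv) y x
  rw [hconst] at hlim
  exact tendsto_nhds_unique tendsto_const_nhds hlim

theorem integral_Ioi_sub_mul_deriv_eq_neg {f f' : ℝ → ℝ} {s : ℝ}
    (hf : ∀ x, HasDerivAt f (f' x) x)
    (hf'int : IntegrableOn (fun x => (x - s) * f' x) (Ioi s))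
    (hfint : IntegrableOn f (Ioi s))
    (hlim : Tendsto (fun x => (x - s) * f x) atTop (nhds 0)) :
    ∫ x in Ioi s, (x - s) * f' x = -∫ x in Ioi s, f x := by
  have hderiv : ∀ x ∈ Ici s, HasDerivAt (fun y => (y - s) * f y) (f x + (x - s) * f' x) x :=
    fun x _ => by simpa using ((hasDerivAt_id x).sub_const s).fun_mul (hf x)
  have h := integral_Ioi_of_hasDerivAt_of_tendsto' hderiv (hfint.add hf'int) hlim
  rw [integral_add hfint hf'int] at h
  simp only [sub_self, zero_mul] at h
  linarith

section TracyWidom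

variable {q p u v : ℝ → ℝ}

theorem hasDerivAt_sq_of_tracyWidom (hq : ∀ x, HasDerivAt q (p x - u x * q x) x) (x : ℝ) :
    HasDerivAt (fun y => q y ^ 2) (2 * (q x * (p x - u x * q x))) x :=
  ((hq x).fun_pow 2).congr_deriv (by ring)

theorem sq_sub_two_mul_eq_sq_of_tracyWidom
    (hq : ∀ x, HasDerivAt q (p x - u x * q x) x)
    (hu : ∀ x, HasDerivAt u (-(q x) ^ 2) x)
    (hv : ∀ x, HasDerivAt v (-(p x * q x)) x)
    (hq0 : Tendsto q atTop (nhds 0)) (hu0 : Tendsto u atTop (nhds 0))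
    (hv0 : Tendsto v atTop (nhds 0)) (x : ℝ) :
    u x ^ 2 - 2 * v x = q x ^ 2 := by
  have hderiv : ∀ y, HasDerivAt (fun y => u y ^ 2 - 2 * v y - q y ^ 2) 0 y := fun y =>
    ((((hu y).fun_pow 2).fun_sub ((hv y).const_mul 2)).fun_sub
      (hasDerivAt_sq_of_tracyWidom hq y)).congr_deriv (by ring)
  have hlim : Tendsto (fun y => u y ^ 2 - 2 * v y - q y ^ 2) atTop (nhds 0) := by
    simpa using ((hu0.pow 2).sub (hv0.const_mul 2)).sub (hq0.pow 2)
  linarith [eq_zero_of_hasDerivAt_zero_of_tendsto_atTop hderiv hlim x]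

theorem integral_Ioi_sq_of_tracyWidom {s : ℝ} (hu : ∀ x, HasDerivAt u (-(q x) ^ 2) x)
    (hu0 : Tendsto u atTop (nhds 0)) (hint : IntegrableOn (fun x => q x ^ 2) (Ioi s)) :
    ∫ x in Ioi s, q x ^ 2 = u s := by
  have h := integral_Ioi_of_hasDerivAt_of_tendsto' (fun x _ => by simpa using (hu x).fun_neg)
    hint (by simpa using hu0.neg)
  simpa using h

theorem integral_Ioi_mul_sub_mul_sq_of_tracyWidom {s : ℝ}
    (hu : ∀ x, HasDerivAt u (-(q x) ^ 2) x) (hv : ∀ x, HasDerivAt v (-(p x * q x)) x)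
    (hu0 : Tendsto u atTop (nhds 0)) (hv0 : Tendsto v atTop (nhds 0))
    (hint : IntegrableOn (fun x => p x * q x - u x * q x ^ 2) (Ioi s)) :
    ∫ x in Ioi s, (p x * q x - u x * q x ^ 2) = v s - u s ^ 2 / 2 := by
  have hderiv : ∀ x ∈ Ici s, HasDerivAt (fun y => u y ^ 2 / 2 - v y)
      (p x * q x - u x * q x ^ 2) x := fun x _ =>
    ((((hu x).fun_pow 2).div_const 2).fun_sub (hv x)).congr_deriv (by ring)
  have hlim : Tendsto (fun y => u y ^ 2 / 2 - v y) atTop (nhds 0) := by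
    simpa using ((hu0.pow 2).div_const 2).sub hv0
  rw [integral_Ioi_of_hasDerivAt_of_tendsto' hderiv hint hlim]
  ring

theorem hasDerivAt_mul_sub_mul_sq_of_tracyWidom
    (hq : ∀ x, HasDerivAt q (p x - u x * q x) x)
    (hp : ∀ x, HasDerivAt p (x * q x - 2 * v x * q x + u x * p x) x)
    (hu : ∀ x, HasDerivAt u (-(q x) ^ 2) x)
    (hfirst : ∀ x, u x ^ 2 - 2 * v x = q x ^ 2) (x : ℝ) :
    HasDerivAt (fun y => p y * q y - u y * q y ^ 2)
      (q x * (x * q x - v x * q x + u x * p x) - 3 * q x ^ 2 * v x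
        + 3 * q x ^ 2 * u x ^ 2 - 3 * p x * q x * u x + p x ^ 2) x :=
  (((hp x).fun_mul (hq x)).fun_sub
    ((hu x).fun_mul (hasDerivAt_sq_of_tracyWidom hq x))).congr_deriv
    (by linear_combination -(q x ^ 2) * hfirst x)

end TracyWidom

theorem stmt4_general (q p u v : ℝ → ℝ)
    (hq : ∀ x : ℝ, HasDerivAt q (p x - u x * q x) x)
    (hp : ∀ x : ℝ, HasDerivAt p (x * q x - 2 * v x * q x + u x * p x) x)
    (hu : ∀ x : ℝ, HasDerivAt u (-(q x) ^ 2) x)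
    (hv : ∀ x : ℝ, HasDerivAt v (-(p x * q x)) x)
    (hq0 : Tendsto q atTop (nhds 0))
    (hu0 : Tendsto u atTop (nhds 0))
    (hv0 : Tendsto v atTop (nhds 0))
    (s : ℝ)
    (q₁ : ℝ → ℝ)
    (hq₁ : ∀ x : ℝ, q₁ x = x * q x - v x * q x + u x * p x)
    (hint1 : IntegrableOn (fun x => (x - s) * (q x * (p x - u x * q x))) (Ioi s))
    (hint2 : IntegrableOn (fun x => (q x) ^ 2) (Ioi s))
    (hint3 : IntegrableOn
      (fun x => (x - s) * (q x * q₁ x - 3 * (q x) ^ 2 * v x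
        + 3 * (q x) ^ 2 * (u x) ^ 2 - 3 * p x * q x * u x + (p x) ^ 2)) (Ioi s))
    (hint4 : IntegrableOn (fun x => p x * q x - u x * (q x) ^ 2) (Ioi s))
    (hlim1 : Tendsto (fun x => (x - s) * (q x) ^ 2) atTop (nhds 0))
    (hlim2 : Tendsto (fun x => (x - s) * (p x * q x - u x * (q x) ^ 2))
      atTop (nhds 0)) :
    ∀ c : ℝ,
      10 * (∫ x in Ioi s, (x - s) * (2 * c * (p x * q x - u x * (q x) ^ 2))) ^ 2
        - 20 * c ^ 2 * ∫ x in Ioi s, (x - s) * (q x * q₁ x - 3 * (q x) ^ 2 * v x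
            + 3 * (q x) ^ 2 * (u x) ^ 2 - 3 * p x * q x * u x + (p x) ^ 2)
      = 20 * c ^ 2 * v s := by
  intro c
  have hfirst := sq_sub_two_mul_eq_sq_of_tracyWidom hq hu hv hq0 hu0 hv0
  have hsq : ∫ x in Ioi s, q x ^ 2 = u s := integral_Ioi_sq_of_tracyWidom hu hu0 hint2
  have hweighted₁ : ∫ x in Ioi s, (x - s) * (q x * (p x - u x * q x)) = -(u s) / 2 := by
    rw [integral_Ioi_sub_mul_deriv_eq_neg (f := fun x => q x ^ 2 / 2)
      (fun x => by simpa using (hasDerivAt_sq_of_tracyWidom hq x).div_const 2) hint1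
      (hint2.div_const 2) (by simpa [mul_div_assoc] using hlim1.div_const 2),
      integral_div, hsq]
    ring
  have hweighted₂ : ∫ x in Ioi s, (x - s) * (q x * q₁ x - 3 * (q x) ^ 2 * v x
      + 3 * (q x) ^ 2 * (u x) ^ 2 - 3 * p x * q x * u x + (p x) ^ 2) = u s ^ 2 / 2 - v s := by
    rw [integral_Ioi_sub_mul_deriv_eq_neg (fun x => by
        simpa only [hq₁] using hasDerivAt_mul_sub_mul_sq_of_tracyWidom hq hp hu hfirst x)
      hint3 hint4 hlim2,
      integral_Ioi_mul_sub_mul_sq_of_tracyWidom hu hv hu0 hv0 hint4]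
    ring
  have hsplit : ∀ x, (x - s) * (2 * c * (p x * q x - u x * q x ^ 2))
      = 2 * c * ((x - s) * (q x * (p x - u x * q x))) := fun x => by ring
  simp_rw [hsplit]
  rw [integral_const_mul, hweighted₁, hweighted₂]
  ring

/-- For the Tracy–Widom system and fixed `s`, with
`q₁(x) = x q(x) - v(x) q(x) + u(x) p(x)`, assuming the stated integrability and
decay hypotheses, for every constant `c`, with `a = 2c (p q - u q²)`, one has
`10 (∫_s^∞ (x-s) a)² - 20 c² ∫_s^∞ (x-s)(q q₁ - 3 q² v + 3 q² u² - 3 p q u + p²)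
  = 20 c² v(s)`. -/
theorem stmt4 (q p u v : ℝ → ℝ)
    (hq : ∀ x : ℝ, HasDerivAt q (p x - u x * q x) x)
    (hp : ∀ x : ℝ, HasDerivAt p (x * q x - 2 * v x * q x + u x * p x) x)
    (hu : ∀ x : ℝ, HasDerivAt u (-(q x) ^ 2) x)
    (hv : ∀ x : ℝ, HasDerivAt v (-(p x * q x)) x)
    (hq0 : Tendsto q atTop (nhds 0))
    (hpq0 : Tendsto (fun x => p x * q x) atTop (nhds 0))
    (hu0 : Tendsto u atTop (nhds 0))
    (hv0 : Tendsto v atTop (nhds 0))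
    (s : ℝ)
    (q₁ : ℝ → ℝ)
    (hq₁ : ∀ x : ℝ, q₁ x = x * q x - v x * q x + u x * p x)
    (hint1 : IntegrableOn (fun x => (x - s) * (q x * (p x - u x * q x))) (Ioi s))
    (hint2 : IntegrableOn (fun x => (q x) ^ 2) (Ioi s))
    (hint3 : IntegrableOn
      (fun x => (x - s) * (q x * q₁ x - 3 * (q x) ^ 2 * v x
        + 3 * (q x) ^ 2 * (u x) ^ 2 - 3 * p x * q x * u x + (p x) ^ 2)) (Ioi s))
    (hint4 : IntegrableOn (fun x => p x * q x - u x * (q x) ^ 2) (Ioi s))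
    (hlim1 : Tendsto (fun x => (x - s) * (q x) ^ 2) atTop (nhds 0))
    (hlim2 : Tendsto (fun x => (x - s) * (p x * q x - u x * (q x) ^ 2))
      atTop (nhds 0)) :
    ∀ c : ℝ,
      10 * (∫ x in Ioi s, (x - s) * (2 * c * (p x * q x - u x * (q x) ^ 2))) ^ 2
        - 20 * c ^ 2 * ∫ x in Ioi s, (x - s) * (q x * q₁ x - 3 * (q x) ^ 2 * v x
            + 3 * (q x) ^ 2 * (u x) ^ 2 - 3 * p x * q x * u x + (p x) ^ 2)
      = 20 * c ^ 2 * v s :=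
  stmt4_general q p u v hq hp hu hv hq0 hu0 hv0 s q₁ hq₁ hint1 hint2 hint3 hint4 hlim1 hlim2
end

section
/- Fix s ∈ ℝ and define q₁(x) := x·q(x) − v(x)q(x) + u(x)p(x). Assume in addition that x ↦ p(x)q(x) and x ↦ (x−s)·(−3·q(x)q₁(x) + 3·q(x)²v(x) − 3·p(x)² + 3·u(x)p(x)q(x)) are Lebesgue integrable on (s, ∞), and that (x−s)·p(x)q(x) → 0 as x → +∞. Then ∫_s^∞ (x−s)·(−3·q(x)q₁(x) + 3·q(x)²v(x) − 3·p(x)² + 3·u(x)p(x)q(x)) dx = 3·v(s). -/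
open Filter MeasureTheory Set

/-! The Tracy–Widom system gives `(p q)' = x q² - 2 v q² + p²` (the `u`-terms cancel), and the
integrand is `-3 (x - s) (p q)'`. Integrating by parts,
`∫_s^∞ (x - s) (p q)' = [(x - s) p q]_s^∞ - ∫_s^∞ p q = 0 - v s`, since `v' = -p q` and `v → 0`. -/

theorem integral_Ioi_sub_mul_of_hasDerivAt {f f' w : ℝ → ℝ} {s : ℝ}
    (hf : ∀ x ∈ Ici s, HasDerivAt f (f' x) x) (hw : ∀ x ∈ Ici s, HasDerivAt w (-f x) x)
    (hint : IntegrableOn (fun x => (x - s) * f' x) (Ioi s))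
    (hlim : Tendsto (fun x => (x - s) * f x) atTop (nhds 0))
    (hw0 : Tendsto w atTop (nhds 0)) :
    ∫ x in Ioi s, (x - s) * f' x = -w s := by
  have hderiv : ∀ x ∈ Ici s, HasDerivAt (fun x => (x - s) * f x + w x) ((x - s) * f' x) x :=
    fun x hx => (((hasDerivAt_id x).sub_const s).mul (hf x hx)).add (hw x hx)
      |>.congr_deriv (by simp)
  have hzero : Tendsto (fun x => (x - s) * f x + w x) atTop (nhds 0) := by
    simpa using hlim.add hw0
  rw [integral_Ioi_of_hasDerivAt_of_tendsto
    (hderiv s self_mem_Ici).continuousAt.continuousWithinAt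
    (fun x hx => hderiv x (mem_Ici_of_Ioi hx)) hint hzero]
  simp

theorem hasDerivAt_mul_of_tracyWidom {q p u v : ℝ → ℝ} {x : ℝ}
    (hq : HasDerivAt q (p x - u x * q x) x)
    (hp : HasDerivAt p (x * q x - 2 * v x * q x + u x * p x) x) :
    HasDerivAt (fun x => p x * q x) (x * q x ^ 2 - 2 * v x * q x ^ 2 + p x ^ 2) x :=
  (hp.mul hq).congr_deriv (by ring)

theorem stmt5_general (q p u v : ℝ → ℝ)
    (hq : ∀ x : ℝ, HasDerivAt q (p x - u x * q x) x)
    (hp : ∀ x : ℝ, HasDerivAt p (x * q x - 2 * v x * q x + u x * p x) x)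
    (hv : ∀ x : ℝ, HasDerivAt v (-(p x * q x)) x)
    (hv0 : Tendsto v atTop (nhds 0))
    (s : ℝ)
    (q₁ : ℝ → ℝ)
    (hq₁ : ∀ x : ℝ, q₁ x = x * q x - v x * q x + u x * p x)
    (hint2 : IntegrableOn
      (fun x => (x - s) * (-3 * q x * q₁ x + 3 * (q x) ^ 2 * v x
        - 3 * (p x) ^ 2 + 3 * u x * p x * q x)) (Ioi s))
    (hlim : Tendsto (fun x => (x - s) * (p x * q x)) atTop (nhds 0)) :
    (∫ x in Ioi s, (x - s) * (-3 * q x * q₁ x + 3 * (q x) ^ 2 * v x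
        - 3 * (p x) ^ 2 + 3 * u x * p x * q x)) = 3 * v s := by
  set g : ℝ → ℝ := fun x => (x - s) * (x * q x ^ 2 - 2 * v x * q x ^ 2 + p x ^ 2)
  have hintegrand : (fun x => (x - s) * (-3 * q x * q₁ x + 3 * (q x) ^ 2 * v x
      - 3 * (p x) ^ 2 + 3 * u x * p x * q x)) = fun x => -3 * g x := by
    funext x
    simp only [g, hq₁ x]
    ring
  have hint : IntegrableOn g (Ioi s) := by
    rw [hintegrand] at hint2
    exact IntegrableOn.congr_fun (hint2.const_mul (-3⁻¹ : ℝ)) (fun x _ => by ring) measurableSet_Ioi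
  have hg : ∫ x in Ioi s, g x = -v s :=
    integral_Ioi_sub_mul_of_hasDerivAt (fun x _ => hasDerivAt_mul_of_tracyWidom (hq x) (hp x))
      (fun x _ => hv x) hint hlim hv0
  rw [hintegrand, integral_const_mul, hg]
  ring

/-- For the Tracy–Widom system and fixed `s`, with
`q₁(x) = x q(x) - v(x) q(x) + u(x) p(x)`, assuming integrability on `(s,∞)` of
`p q` and of `(x-s)·(-3 q q₁ + 3 q² v - 3 p² + 3 u p q)`, and `(x-s)·p q → 0` at
`+∞`, one has `∫_s^∞ (x-s)·(-3 q q₁ + 3 q² v - 3 p² + 3 u p q) dx = 3 v(s)`. -/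
theorem stmt5 (q p u v : ℝ → ℝ)
    (hq : ∀ x : ℝ, HasDerivAt q (p x - u x * q x) x)
    (hp : ∀ x : ℝ, HasDerivAt p (x * q x - 2 * v x * q x + u x * p x) x)
    (hu : ∀ x : ℝ, HasDerivAt u (-(q x) ^ 2) x)
    (hv : ∀ x : ℝ, HasDerivAt v (-(p x * q x)) x)
    (hq0 : Tendsto q atTop (nhds 0))
    (hpq0 : Tendsto (fun x => p x * q x) atTop (nhds 0))
    (hu0 : Tendsto u atTop (nhds 0))
    (hv0 : Tendsto v atTop (nhds 0))
    (s : ℝ)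
    (q₁ : ℝ → ℝ)
    (hq₁ : ∀ x : ℝ, q₁ x = x * q x - v x * q x + u x * p x)
    (hint1 : IntegrableOn (fun x => p x * q x) (Ioi s))
    (hint2 : IntegrableOn
      (fun x => (x - s) * (-3 * q x * q₁ x + 3 * (q x) ^ 2 * v x
        - 3 * (p x) ^ 2 + 3 * u x * p x * q x)) (Ioi s))
    (hlim : Tendsto (fun x => (x - s) * (p x * q x)) atTop (nhds 0)) :
    (∫ x in Ioi s, (x - s) * (-3 * q x * q₁ x + 3 * (q x) ^ 2 * v x
        - 3 * (p x) ^ 2 + 3 * u x * p x * q x)) = 3 * v s :=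
  stmt5_general q p u v hq hp hv hv0 s q₁ hq₁ hint2 hlim
end

section
/- Fix s ∈ ℝ, and set h(x) := 6·q(x)q₁(x) + 2·p₂(x)q(x) + 2·p₁(x)q(x)v(x) + 2·p(x)q(x)v₁(x) − 2·q₂(x)q(x)u(x) − 2·q₁(x)q(x)u₁(x) − 2·q(x)²u₂(x) − 2·p(x)² and G(x) := −6·u₁(x) − 2·v₂(x) − 2·v₁(x)v(x) + 2·u₂(x)u(x) + u₁(x)² + 2·w(x). Assume in addition that x ↦ (x−s)·h(x) and x ↦ G(x) are Lebesgue integrable on (s, ∞) and that (x−s)·G(x) → 0 as x → +∞. Then ∫_s^∞ (x−s)·h(x) dx = −∫_s^∞ G(x) dx, i.e. ∫_s^∞ (x−s)·h(x) dx = ∫_s^∞ (6·u₁(x) + 2·v₂(x) + 2·v₁(x)v(x) − 2·u₂(x)u(x) − u₁(x)² − 2·w(x)) dx. -/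
open Filter MeasureTheory Set

/-! `G' = h` follows from the derivative relations by the product rule, and the identity is
then an integration by parts of `(x - s) · G'` on `(s, ∞)`: the boundary term vanishes at `s`
because of the factor `x - s` and at `+∞` by assumption. -/

theorem integral_Ioi_sub_mul_deriv_eq_neg_integral {G g : ℝ → ℝ} {s : ℝ}
    (hG : ∀ x ∈ Ici s, HasDerivAt G (g x) x)
    (hg : IntegrableOn (fun x => (x - s) * g x) (Ioi s)) (hGint : IntegrableOn G (Ioi s))
    (hlim : Tendsto (fun x => (x - s) * G x) atTop (nhds 0)) :
    ∫ x in Ioi s, (x - s) * g x = -∫ x in Ioi s, G x := by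
  have hderiv : ∀ x ∈ Ici s, HasDerivAt (fun x => (x - s) * G x) (G x + (x - s) * g x) x := by
    intro x hx
    simpa only [one_mul] using ((hasDerivAt_id' x).sub_const s).fun_mul (hG x hx)
  have hsum : ∫ x in Ioi s, (G x + (x - s) * g x) = 0 := by
    simpa using integral_Ioi_of_hasDerivAt_of_tendsto' hderiv (hGint.add hg) hlim
  rw [integral_add hGint hg] at hsum
  linarith

theorem hasDerivAt_tracyWidom_G {q p u v q₁ q₂ p₁ p₂ u₁ u₂ v₁ v₂ w : ℝ → ℝ} {x : ℝ}
    (hu : HasDerivAt u (-(q x) ^ 2) x) (hv : HasDerivAt v (-(p x * q x)) x)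
    (hu₁ : HasDerivAt u₁ (-(q x * q₁ x)) x) (hu₂ : HasDerivAt u₂ (-(q x * q₂ x)) x)
    (hv₁ : HasDerivAt v₁ (-(q x * p₁ x)) x) (hv₂ : HasDerivAt v₂ (-(q x * p₂ x)) x)
    (hw : HasDerivAt w (-(p x) ^ 2) x) :
    HasDerivAt (fun x => -6 * u₁ x - 2 * v₂ x - 2 * v₁ x * v x + 2 * u₂ x * u x
        + (u₁ x) ^ 2 + 2 * w x)
      (6 * q x * q₁ x + 2 * p₂ x * q x + 2 * p₁ x * q x * v x
        + 2 * p x * q x * v₁ x - 2 * q₂ x * q x * u x - 2 * q₁ x * q x * u₁ x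
        - 2 * (q x) ^ 2 * u₂ x - 2 * (p x) ^ 2) x := by
  refine ((((((hu₁.const_mul (-6)).fun_sub (hv₂.const_mul 2)).fun_sub
    ((hv₁.const_mul 2).fun_mul hv)).fun_add ((hu₂.const_mul 2).fun_mul hu)).fun_add
    (hu₁.fun_pow 2)).fun_add (hw.const_mul 2)).congr_deriv ?_
  push_cast
  ring

theorem stmt8_general (q p u v q₁ q₂ p₁ p₂ u₁ u₂ v₁ v₂ w : ℝ → ℝ)
    (hu : ∀ x : ℝ, HasDerivAt u (-(q x) ^ 2) x)
    (hv : ∀ x : ℝ, HasDerivAt v (-(p x * q x)) x)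
    (hu₁ : ∀ x : ℝ, HasDerivAt u₁ (-(q x * q₁ x)) x)
    (hu₂ : ∀ x : ℝ, HasDerivAt u₂ (-(q x * q₂ x)) x)
    (hv₁ : ∀ x : ℝ, HasDerivAt v₁ (-(q x * p₁ x)) x)
    (hv₂ : ∀ x : ℝ, HasDerivAt v₂ (-(q x * p₂ x)) x)
    (hw : ∀ x : ℝ, HasDerivAt w (-(p x) ^ 2) x)
    (s : ℝ)
    (hinth : IntegrableOn
      (fun x => (x - s) * (6 * q x * q₁ x + 2 * p₂ x * q x + 2 * p₁ x * q x * v x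
        + 2 * p x * q x * v₁ x - 2 * q₂ x * q x * u x - 2 * q₁ x * q x * u₁ x
        - 2 * (q x) ^ 2 * u₂ x - 2 * (p x) ^ 2)) (Ioi s))
    (hintG : IntegrableOn
      (fun x => -6 * u₁ x - 2 * v₂ x - 2 * v₁ x * v x + 2 * u₂ x * u x
        + (u₁ x) ^ 2 + 2 * w x) (Ioi s))
    (hlimG : Tendsto
      (fun x => (x - s) * (-6 * u₁ x - 2 * v₂ x - 2 * v₁ x * v x + 2 * u₂ x * u x
        + (u₁ x) ^ 2 + 2 * w x)) atTop (nhds 0)) :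
    (∫ x in Ioi s, (x - s) * (6 * q x * q₁ x + 2 * p₂ x * q x + 2 * p₁ x * q x * v x
        + 2 * p x * q x * v₁ x - 2 * q₂ x * q x * u x - 2 * q₁ x * q x * u₁ x
        - 2 * (q x) ^ 2 * u₂ x - 2 * (p x) ^ 2))
      = -(∫ x in Ioi s, (-6 * u₁ x - 2 * v₂ x - 2 * v₁ x * v x + 2 * u₂ x * u x
          + (u₁ x) ^ 2 + 2 * w x)) ∧
    (∫ x in Ioi s, (x - s) * (6 * q x * q₁ x + 2 * p₂ x * q x + 2 * p₁ x * q x * v x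
        + 2 * p x * q x * v₁ x - 2 * q₂ x * q x * u x - 2 * q₁ x * q x * u₁ x
        - 2 * (q x) ^ 2 * u₂ x - 2 * (p x) ^ 2))
      = ∫ x in Ioi s, (6 * u₁ x + 2 * v₂ x + 2 * v₁ x * v x - 2 * u₂ x * u x
          - (u₁ x) ^ 2 - 2 * w x) := by
  have hG x (_ : x ∈ Ici s) := hasDerivAt_tracyWidom_G (hu x) (hv x) (hu₁ x) (hu₂ x)
    (hv₁ x) (hv₂ x) (hw x)
  have main := integral_Ioi_sub_mul_deriv_eq_neg_integral hG hinth hintG hlimG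
  refine ⟨main, main.trans ?_⟩
  rw [← integral_neg]
  congr with x
  ring

/-- For the Tracy–Widom system together with differentiable functions
`q₁, q₂, p₁, p₂, u₁, u₂, v₁, v₂, w` satisfying `u₁' = -q q₁`, `u₂' = -q q₂`,
`v₁' = -q p₁`, `v₂' = -q p₂`, `w' = -p²`, and a fixed `s`, put
`h = 6 q q₁ + 2 p₂ q + 2 p₁ q v + 2 p q v₁ - 2 q₂ q u - 2 q₁ q u₁ - 2 q² u₂ - 2 p²`
and `G = -6 u₁ - 2 v₂ - 2 v₁ v + 2 u₂ u + u₁² + 2 w`. If `(x-s)·h` and `G` are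
integrable on `(s,∞)` and `(x-s)·G → 0` at `+∞`, then
`∫_s^∞ (x-s)·h = -∫_s^∞ G`, i.e.
`∫_s^∞ (x-s)·h = ∫_s^∞ (6 u₁ + 2 v₂ + 2 v₁ v - 2 u₂ u - u₁² - 2 w)`. -/
theorem stmt8 (q p u v q₁ q₂ p₁ p₂ u₁ u₂ v₁ v₂ w : ℝ → ℝ)
    (hq : ∀ x : ℝ, HasDerivAt q (p x - u x * q x) x)
    (hp : ∀ x : ℝ, HasDerivAt p (x * q x - 2 * v x * q x + u x * p x) x)
    (hu : ∀ x : ℝ, HasDerivAt u (-(q x) ^ 2) x)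
    (hv : ∀ x : ℝ, HasDerivAt v (-(p x * q x)) x)
    (hq0 : Tendsto q atTop (nhds 0))
    (hpq0 : Tendsto (fun x => p x * q x) atTop (nhds 0))
    (hu0 : Tendsto u atTop (nhds 0))
    (hv0 : Tendsto v atTop (nhds 0))
    (hq₁d : Differentiable ℝ q₁) (hq₂d : Differentiable ℝ q₂)
    (hp₁d : Differentiable ℝ p₁) (hp₂d : Differentiable ℝ p₂)
    (hu₁ : ∀ x : ℝ, HasDerivAt u₁ (-(q x * q₁ x)) x)
    (hu₂ : ∀ x : ℝ, HasDerivAt u₂ (-(q x * q₂ x)) x)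
    (hv₁ : ∀ x : ℝ, HasDerivAt v₁ (-(q x * p₁ x)) x)
    (hv₂ : ∀ x : ℝ, HasDerivAt v₂ (-(q x * p₂ x)) x)
    (hw : ∀ x : ℝ, HasDerivAt w (-(p x) ^ 2) x)
    (s : ℝ)
    (hinth : IntegrableOn
      (fun x => (x - s) * (6 * q x * q₁ x + 2 * p₂ x * q x + 2 * p₁ x * q x * v x
        + 2 * p x * q x * v₁ x - 2 * q₂ x * q x * u x - 2 * q₁ x * q x * u₁ x
        - 2 * (q x) ^ 2 * u₂ x - 2 * (p x) ^ 2)) (Ioi s))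
    (hintG : IntegrableOn
      (fun x => -6 * u₁ x - 2 * v₂ x - 2 * v₁ x * v x + 2 * u₂ x * u x
        + (u₁ x) ^ 2 + 2 * w x) (Ioi s))
    (hlimG : Tendsto
      (fun x => (x - s) * (-6 * u₁ x - 2 * v₂ x - 2 * v₁ x * v x + 2 * u₂ x * u x
        + (u₁ x) ^ 2 + 2 * w x)) atTop (nhds 0)) :
    (∫ x in Ioi s, (x - s) * (6 * q x * q₁ x + 2 * p₂ x * q x + 2 * p₁ x * q x * v x
        + 2 * p x * q x * v₁ x - 2 * q₂ x * q x * u x - 2 * q₁ x * q x * u₁ x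
        - 2 * (q x) ^ 2 * u₂ x - 2 * (p x) ^ 2))
      = -(∫ x in Ioi s, (-6 * u₁ x - 2 * v₂ x - 2 * v₁ x * v x + 2 * u₂ x * u x
          + (u₁ x) ^ 2 + 2 * w x)) ∧
    (∫ x in Ioi s, (x - s) * (6 * q x * q₁ x + 2 * p₂ x * q x + 2 * p₁ x * q x * v x
        + 2 * p x * q x * v₁ x - 2 * q₂ x * q x * u x - 2 * q₁ x * q x * u₁ x
        - 2 * (q x) ^ 2 * u₂ x - 2 * (p x) ^ 2))
      = ∫ x in Ioi s, (6 * u₁ x + 2 * v₂ x + 2 * v₁ x * v x - 2 * u₂ x * u x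
          - (u₁ x) ^ 2 - 2 * w x) :=
  stmt8_general q p u v q₁ q₂ p₁ p₂ u₁ u₂ v₁ v₂ w hu hv hu₁ hu₂ hv₁ hv₂ hw s hinth hintG hlimG
end
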